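/- For a positive constant-free smooth density ρ : ℝⁿ → ℝ with ρ > 0, and K(ρ) = c/ρ with c > 0, one has the quantum Bohm identity: 2 ρ ∇(Δ√ρ / √ρ) = div(ρ ∇∇ log ρ), i.e., for each coordinate direction the vector field 2 ρ ∂ᵢ(Δ√ρ/√ρ) equals Σⱼ ∂ⱼ(ρ ∂ᵢ∂ⱼ log ρ). -/

import Mathlib

/-- Partial derivative in direction `i` of a scalar field on `Fin n → ℝ`. -/
noncomputable def pd {n : ℕ} (i : Fin n) (f : (Fin n → ℝ) → ℝ) (x : Fin n → ℝ) : ℝ :=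
  fderiv ℝ f x (Pi.single i 1)

/-- Laplacian of a scalar field on `Fin n → ℝ`. -/
noncomputable def lap {n : ℕ} (f : (Fin n → ℝ) → ℝ) (x : Fin n → ℝ) : ℝ :=
  ∑ i, pd i (fun y => pd i f y) x

section Aux

variable {n : ℕ}

lemma pd_contDiff (i : Fin n) {f : (Fin n → ℝ) → ℝ} (hf : ContDiff ℝ (⊤ : ℕ∞) f) :
    ContDiff ℝ (⊤ : ℕ∞) (pd i f) := by
  have h : ContDiff ℝ (⊤ : ℕ∞) fun x => (fderiv ℝ f x) (Pi.single i 1) :=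
    (hf.fderiv_right (by simp)).clm_apply contDiff_const
  exact h

lemma pd_mul (i : Fin n) {f g : (Fin n → ℝ) → ℝ} {x : Fin n → ℝ}
    (hf : DifferentiableAt ℝ f x) (hg : DifferentiableAt ℝ g x) :
    pd i (fun y => f y * g y) x = pd i f x * g x + f x * pd i g x := by
  unfold pd
  rw [fderiv_fun_mul hf hg]
  simp only [ContinuousLinearMap.add_apply, ContinuousLinearMap.smul_apply, smul_eq_mul]
  ring

lemma pd_inv (i : Fin n) {g : (Fin n → ℝ) → ℝ} {x : Fin n → ℝ}
    (hg : DifferentiableAt ℝ g x) (hx : g x ≠ 0) :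
    pd i (fun y => (g y)⁻¹) x = -pd i g x / (g x) ^ 2 := by
  have h : HasFDerivAt (fun y => (g y)⁻¹) (-(g x ^ 2)⁻¹ • fderiv ℝ g x) x :=
    (hasDerivAt_inv hx).comp_hasFDerivAt x hg.hasFDerivAt
  unfold pd
  rw [h.fderiv]
  simp only [ContinuousLinearMap.smul_apply, smul_eq_mul]
  field_simp

lemma pd_div (i : Fin n) {f g : (Fin n → ℝ) → ℝ} {x : Fin n → ℝ}
    (hf : DifferentiableAt ℝ f x) (hg : DifferentiableAt ℝ g x) (hx : g x ≠ 0) :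
    pd i (fun y => f y / g y) x
      = (pd i f x * g x - f x * pd i g x) / (g x) ^ 2 := by
  simp only [div_eq_mul_inv]
  rw [pd_mul i (g := fun y => (g y)⁻¹) hf (hg.inv hx), pd_inv i hg hx]
  field_simp
  ring

lemma pd_log (i : Fin n) {f : (Fin n → ℝ) → ℝ} {x : Fin n → ℝ}
    (hf : DifferentiableAt ℝ f x) (hx : f x ≠ 0) :
    pd i (fun y => Real.log (f y)) x = pd i f x / f x := by
  unfold pd
  rw [(hf.hasFDerivAt.log hx).fderiv]
  simp [div_eq_inv_mul]

lemma pd_sum (i : Fin n) {F : Fin n → (Fin n → ℝ) → ℝ} {x : Fin n → ℝ}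
    (hF : ∀ j, DifferentiableAt ℝ (F j) x) :
    pd i (fun y => ∑ j, F j y) x = ∑ j, pd i (F j) x := by
  unfold pd
  rw [fderiv_fun_sum fun j _ => hF j]
  simp

lemma pd_const_mul (i : Fin n) (c : ℝ) {f : (Fin n → ℝ) → ℝ} {x : Fin n → ℝ}
    (hf : DifferentiableAt ℝ f x) :
    pd i (fun y => c * f y) x = c * pd i f x := by
  unfold pd
  rw [fderiv_const_mul hf]
  simp

lemma pd_sub (i : Fin n) {f g : (Fin n → ℝ) → ℝ} {x : Fin n → ℝ}
    (hf : DifferentiableAt ℝ f x) (hg : DifferentiableAt ℝ g x) :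
    pd i (fun y => f y - g y) x = pd i f x - pd i g x := by
  unfold pd
  rw [fderiv_fun_sub hf hg]
  simp

lemma pd_symm {f : (Fin n → ℝ) → ℝ} (hf : ContDiff ℝ (⊤ : ℕ∞) f) (a b : Fin n) (x : Fin n → ℝ) :
    pd a (pd b f) x = pd b (pd a f) x := by
  have hdf : DifferentiableAt ℝ (fderiv ℝ f) x :=
    ((hf.fderiv_right (m := 1) (WithTop.coe_le_coe.2 le_top)).differentiable one_ne_zero) x
  have h1 : ∀ (v w : Fin n → ℝ), fderiv ℝ (fun y => fderiv ℝ f y w) x v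
      = fderiv ℝ (fderiv ℝ f) x v w := by
    intro v w
    rw [fderiv_clm_apply hdf (differentiableAt_const w)]
    simp
  have hsymm := (hf.contDiffAt (x := x)).isSymmSndFDerivAt
    (by rw [minSmoothness_of_isRCLikeNormedField]; exact WithTop.coe_le_coe.2 le_top)
  show fderiv ℝ (fun y => fderiv ℝ f y (Pi.single b 1)) x (Pi.single a 1)
      = fderiv ℝ (fun y => fderiv ℝ f y (Pi.single a 1)) x (Pi.single b 1)
  rw [h1, h1]
  exact hsymm _ _

end Aux

/-- Quantum Bohm identity: `2 ρ ∇(Δ√ρ / √ρ) = div(ρ ∇∇ log ρ)` for smooth positive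
`ρ` (here `K(ρ) = c/ρ` with `c > 0`). -/
theorem quantum_bohm_identity {n : ℕ} (ρ : (Fin n → ℝ) → ℝ) (K : ℝ → ℝ) (c : ℝ)
    (hc : 0 < c) (hK : ∀ r > (0:ℝ), K r = c / r)
    (hρ : ContDiff ℝ (⊤ : ℕ∞) ρ) (hρpos : ∀ x, 0 < ρ x) :
    ∀ (x : Fin n → ℝ) (i : Fin n),
      2 * ρ x *
        pd i (fun y => lap (fun z => Real.sqrt (ρ z)) y / Real.sqrt (ρ y)) x
      = ∑ j, pd j
          (fun y => ρ y * pd i (fun z => pd j (fun w => Real.log (ρ w)) z) y) x := by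
  intro x i
  set u : (Fin n → ℝ) → ℝ := fun z => Real.sqrt (ρ z) with hu_def
  have hu : ContDiff ℝ (⊤ : ℕ∞) u := by
    rw [contDiff_iff_contDiffAt]
    intro y
    exact (Real.contDiffAt_sqrt (hρpos y).ne').comp y hρ.contDiffAt
  have hupos : ∀ y, 0 < u y := fun y => Real.sqrt_pos.2 (hρpos y)
  have hρeq : ∀ y, ρ y = u y * u y := fun y => (Real.mul_self_sqrt (hρpos y).le).symm
  have hρd : Differentiable ℝ ρ := hρ.differentiable (by simp)
  have hud : Differentiable ℝ u := hu.differentiable (by simp)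
  -- first derivatives of u (smooth) and second derivatives
  have hpu : ∀ j, ContDiff ℝ (⊤ : ℕ∞) (pd j u) := fun j => pd_contDiff j hu
  have hqu : ∀ a b, ContDiff ℝ (⊤ : ℕ∞) (pd a (pd b u)) := fun a b => pd_contDiff a (hpu b)
  -- derivative of ρ in terms of u
  have hpdρ : ∀ j z, pd j ρ z = 2 * u z * pd j u z := by
    intro j z
    have : ρ = fun y => u y * u y := funext hρeq
    rw [this, pd_mul j (hud z) (hud z)]
    ring
  -- the function pd j (log ∘ ρ)
  have hlog : ∀ (j : Fin n), (fun z => pd j (fun w => Real.log (ρ w)) z)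
      = fun z => 2 * (pd j u z / u z) := by
    intro j
    funext z
    rw [pd_log j (hρd z) (hρpos z).ne', hpdρ j z, hρeq z]
    field_simp [(hupos z).ne']
  -- the integrand function of the RHS, rewritten in terms of u
  have hg : ∀ (j : Fin n),
      (fun y => ρ y * pd i (fun z => pd j (fun w => Real.log (ρ w)) z) y)
      = fun y => 2 * (u y * pd i (pd j u) y - pd i u y * pd j u y) := by
    intro j
    funext y
    rw [hlog j]
    have h2 : pd i (fun z => 2 * (pd j u z / u z)) y
        = 2 * ((pd i (pd j u) y * u y - pd j u y * pd i u y) / (u y) ^ 2) := by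
      have hdivd : DifferentiableAt ℝ (fun z => pd j u z / u z) y := by
        simp only [div_eq_mul_inv]
        exact ((hpu j).differentiable (by simp) y).mul ((hud y).inv (hupos y).ne')
      rw [pd_const_mul i 2 hdivd,
        pd_div i ((hpu j).differentiable (by simp) y) (hud y) (hupos y).ne']
    rw [h2, hρeq y]
    field_simp [(hupos y).ne']
  -- the RHS terms
  have hrhs : ∀ (j : Fin n),
      pd j (fun y => ρ y * pd i (fun z => pd j (fun w => Real.log (ρ w)) z) y) x
      = 2 * (u x * pd i (pd j (pd j u)) x - pd i u x * pd j (pd j u) x) := by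
    intro j
    rw [hg j]
    have dA : DifferentiableAt ℝ (fun y => u y * pd i (pd j u) y) x :=
      (hud x).mul ((hqu i j).differentiable (by simp) x)
    have dB : DifferentiableAt ℝ (fun y => pd i u y * pd j u y) x :=
      ((pd_contDiff i hu).differentiable (by simp) x).mul ((hpu j).differentiable (by simp) x)
    rw [pd_const_mul j 2 (dA.fun_sub dB), pd_sub j dA dB,
      pd_mul j (hud x) ((hqu i j).differentiable (by simp) x),
      pd_mul j ((pd_contDiff i hu).differentiable (by simp) x) ((hpu j).differentiable (by simp) x)]
    have s1 : pd j (pd i (pd j u)) x = pd i (pd j (pd j u)) x := pd_symm (hpu j) j i x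
    have s2 : pd j (pd i u) x = pd i (pd j u) x := pd_symm hu j i x
    rw [s1, s2]
    ring
  -- the LHS
  have hlap : (fun y => lap (fun z => Real.sqrt (ρ z)) y / Real.sqrt (ρ y))
      = fun y => (∑ j, pd j (pd j u) y) / u y := rfl
  have hNd : DifferentiableAt ℝ (fun y => ∑ j, pd j (pd j u) y) x := by
    apply DifferentiableAt.fun_sum
    intro j _
    exact (hqu j j).differentiable (by simp) x
  have hlhs : pd i (fun y => lap (fun z => Real.sqrt (ρ z)) y / Real.sqrt (ρ y)) x
      = ((∑ j, pd i (pd j (pd j u)) x) * u x - (∑ j, pd j (pd j u) x) * pd i u x)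
        / (u x) ^ 2 := by
    rw [hlap, pd_div i hNd (hud x) (hupos x).ne',
      pd_sum i fun j => (hqu j j).differentiable (by simp) x]
  rw [hlhs]
  calc 2 * ρ x * (((∑ j, pd i (pd j (pd j u)) x) * u x
          - (∑ j, pd j (pd j u) x) * pd i u x) / (u x) ^ 2)
      = ∑ j, 2 * (u x * pd i (pd j (pd j u)) x - pd i u x * pd j (pd j u) x) := by
        rw [hρeq x]
        simp only [mul_sub, Finset.sum_sub_distrib]
        simp only [← Finset.mul_sum]
        field_simp [(hupos x).ne']
    _ = ∑ j, pd j
          (fun y => ρ y * pd i (fun z => pd j (fun w => Real.log (ρ w)) z) y) x := by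
        exact Finset.sum_congr rfl fun j _ => (hrhs j).symm
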